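/- Let C_{p,q,r} be the type-III bicyclic graph with p = q and q − r = 2. Then the vertices v_p and v_{p+q+r} have equal distances to v_1 and to v_{p+2}; hence {v_1, v_{p+2}} is not a resolving set. -/

import Mathlib

/-- `W` is a resolving set for `G`: distinct vertices have distinct
distance vectors to the elements of `W`. -/
def IsResolving {V : Type*} (G : SimpleGraph V) (W : Set V) : Prop :=
  ∀ u v : V, (∀ w ∈ W, G.dist u w = G.dist v w) → u = v

/-- The metric dimension of `G`: the minimum cardinality of a resolving set. -/
noncomputable def metricDim {V : Type*} [Fintype V] (G : SimpleGraph V) : ℕ :=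
  sInf {n | ∃ W : Finset V, IsResolving G (↑W) ∧ W.card = n}

/-- The type-III base bicyclic graph `C_{p,q,r}` on vertices `v_1, …, v_{p+q+r}`
(vertex `v_i` is index `i-1`): three paths on `p`, `q`, `r` vertices, with the
extra edges `v_{p+1}v_1`, `v_{p+1}v_{p+q+1}`, `v_{p+q}v_p`, `v_{p+q}v_{p+q+r}`.
Note `C_{p,q,r} ≅ Θ_{p+1,q-1,r+1}`. -/
def bicyclicIII (p q r : ℕ) : SimpleGraph (Fin (p + q + r)) :=
  SimpleGraph.fromRel (fun a b =>
    (a.val + 1 = b.val ∧ (b.val < p ∨ (p ≤ a.val ∧ b.val < p + q) ∨ p + q ≤ a.val))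
    ∨ (a.val = p ∧ b.val = 0)
    ∨ (a.val = p ∧ b.val = p + q)
    ∨ (a.val = p + q - 1 ∧ b.val = p - 1)
    ∨ (a.val = p + q - 1 ∧ b.val = p + q + r - 1))

/-- A 1-Lipschitz integer potential gives a lower bound on walk lengths. -/
lemma walk_abs_le {V : Type*} {G : SimpleGraph V} (f : V → ℤ)
    (hf : ∀ a b, G.Adj a b → (f a - f b).natAbs ≤ 1) :
    ∀ {u v : V} (w : G.Walk u v), (f u - f v).natAbs ≤ w.length := by
  intro u v w
  induction w with
  | nil => simp
  | cons h w ih =>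
    have := hf _ _ h
    simp only [SimpleGraph.Walk.length_cons]
    omega

/-- A 1-Lipschitz integer potential gives a lower bound on distances. -/
lemma dist_ge_of_lipschitz {V : Type*} {G : SimpleGraph V} (f : V → ℤ)
    (hf : ∀ a b, G.Adj a b → (f a - f b).natAbs ≤ 1) {u v : V}
    (h : G.Reachable u v) : (f u - f v).natAbs ≤ G.dist u v := by
  obtain ⟨w, hw⟩ := h.exists_walk_length_eq_dist
  rw [← hw]
  exact walk_abs_le f hf w

/-- A chain of adjacent vertices yields a walk of the corresponding length. -/
lemma chain_walk {V : Type*} {G : SimpleGraph V} (g : ℕ → V) :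
    ∀ m, (∀ i, i < m → G.Adj (g i) (g (i + 1))) →
      ∃ w : G.Walk (g 0) (g m), w.length = m := by
  intro m
  induction m with
  | zero => exact fun _ => ⟨SimpleGraph.Walk.nil, rfl⟩
  | succ m ih =>
    intro h
    obtain ⟨w, hw⟩ := ih (fun i hi => h i (by omega))
    exact ⟨w.concat (h m (by omega)), by simp [SimpleGraph.Walk.length_concat, hw]⟩

def fzero (p q r : ℕ) (x : Fin (p + q + r)) : ℤ :=
  if x.val < p then (x.val : ℤ)
  else if x.val < p + q then (x.val : ℤ) - p + 1
  else (x.val : ℤ) - (p + q) + 2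

def fone (p q r : ℕ) (x : Fin (p + q + r)) : ℤ :=
  if x.val < p then min ((x.val : ℤ) + 2) ((p : ℤ) + q - 2 - x.val)
  else if x.val < p + q then (((x.val : ℤ) - (p + 1)).natAbs : ℤ)
  else min ((x.val : ℤ) - (p + q) + 2) ((q : ℤ) + r - 2 - ((x.val : ℤ) - (p + q)))

lemma biii_adj_iff (p q r : ℕ) (a b : Fin (p + q + r)) :
    (bicyclicIII p q r).Adj a b ↔ ¬ a.val = b.val ∧
      (((a.val + 1 = b.val ∧ (b.val < p ∨ (p ≤ a.val ∧ b.val < p + q) ∨ p + q ≤ a.val))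
        ∨ (a.val = p ∧ b.val = 0)
        ∨ (a.val = p ∧ b.val = p + q)
        ∨ (a.val = p + q - 1 ∧ b.val = p - 1)
        ∨ (a.val = p + q - 1 ∧ b.val = p + q + r - 1))
      ∨ ((b.val + 1 = a.val ∧ (a.val < p ∨ (p ≤ b.val ∧ a.val < p + q) ∨ p + q ≤ b.val))
        ∨ (b.val = p ∧ a.val = 0)
        ∨ (b.val = p ∧ a.val = p + q)
        ∨ (b.val = p + q - 1 ∧ a.val = p - 1)
        ∨ (b.val = p + q - 1 ∧ a.val = p + q + r - 1))) := by
  rw [bicyclicIII, SimpleGraph.fromRel_adj, ne_eq, Fin.ext_iff]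

set_option maxHeartbeats 1000000 in
lemma biii_lip0 (p q r : ℕ) (hr : 1 ≤ r) (hpq : p = q) (hq : q = r + 2) :
    ∀ a b, (bicyclicIII p q r).Adj a b →
      (fzero p q r a - fzero p q r b).natAbs ≤ 1 := by
  intro a b hab
  rw [biii_adj_iff] at hab
  have ha := a.isLt
  have hb := b.isLt
  obtain ⟨hne, hrel⟩ := hab
  simp only [fzero]
  split_ifs <;> omega

set_option maxHeartbeats 1000000 in
lemma biii_lip1 (p q r : ℕ) (hr : 1 ≤ r) (hpq : p = q) (hq : q = r + 2) :
    ∀ a b, (bicyclicIII p q r).Adj a b →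
      (fone p q r a - fone p q r b).natAbs ≤ 1 := by
  intro a b hab
  rw [biii_adj_iff] at hab
  have ha := a.isLt
  have hb := b.isLt
  obtain ⟨hne, hrel⟩ := hab
  simp only [fone]
  split_ifs <;> omega

set_option maxHeartbeats 1000000 in
lemma biii_walkA (p q r : ℕ) (hr : 1 ≤ r) (hpq : p = q) (hq : q = r + 2) :
    ∃ w : (bicyclicIII p q r).Walk ⟨0, by subst hpq hq; omega⟩ ⟨p - 1, by subst hpq hq; omega⟩,
      w.length = r + 1 := by
  obtain ⟨w, hw⟩ := chain_walk (G := bicyclicIII p q r)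
    (fun i => (⟨min i (p - 1), by omega⟩ : Fin (p + q + r))) (p - 1)
    (by
      intro i hi
      rw [biii_adj_iff]
      dsimp only
      have h1 : min i (p - 1) = i := by omega
      have h2 : min (i + 1) (p - 1) = i + 1 := by omega
      rw [h1, h2]
      exact ⟨by omega, Or.inl (Or.inl ⟨rfl, Or.inl (by omega)⟩)⟩)
  have h0 : (⟨min 0 (p - 1), by omega⟩ : Fin (p + q + r)) = ⟨0, by subst hpq hq; omega⟩ :=
    Fin.ext (by show min 0 (p - 1) = 0; omega)
  have h1 : (⟨min (p - 1) (p - 1), by omega⟩ : Fin (p + q + r)) = ⟨p - 1, by subst hpq hq; omega⟩ :=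
    Fin.ext (by show min (p - 1) (p - 1) = p - 1; omega)
  exact ⟨w.copy h0 h1, by rw [SimpleGraph.Walk.length_copy, hw]; omega⟩

set_option maxHeartbeats 1000000 in
lemma biii_walkB (p q r : ℕ) (hr : 1 ≤ r) (hpq : p = q) (hq : q = r + 2) :
    ∃ w : (bicyclicIII p q r).Walk ⟨0, by subst hpq hq; omega⟩ ⟨p + q + r - 1, by subst hpq hq; omega⟩,
      w.length = r + 1 := by
  have e1 : (bicyclicIII p q r).Adj ⟨0, by subst hpq hq; omega⟩ ⟨p, by omega⟩ :=
    (biii_adj_iff p q r _ _).mpr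
      ⟨by show ¬ (0 = p); omega, Or.inr (Or.inr (Or.inl ⟨rfl, rfl⟩))⟩
  have e2 : (bicyclicIII p q r).Adj ⟨p, by omega⟩ ⟨p + q, by omega⟩ :=
    (biii_adj_iff p q r _ _).mpr
      ⟨by show ¬ (p = p + q); omega, Or.inl (Or.inr (Or.inr (Or.inl ⟨rfl, rfl⟩)))⟩
  obtain ⟨w, hw⟩ := chain_walk (G := bicyclicIII p q r)
    (fun i => (⟨min (p + q + i) (p + q + r - 1), by omega⟩ : Fin (p + q + r))) (r - 1)
    (by
      intro i hi
      rw [biii_adj_iff]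
      dsimp only
      have h1 : min (p + q + i) (p + q + r - 1) = p + q + i := by omega
      have h2 : min (p + q + (i + 1)) (p + q + r - 1) = p + q + i + 1 := by omega
      rw [h1, h2]
      exact ⟨by omega, Or.inl (Or.inl ⟨rfl, Or.inr (Or.inr (by omega))⟩)⟩)
  have h0 : (⟨min (p + q + 0) (p + q + r - 1), by omega⟩ : Fin (p + q + r))
      = ⟨p + q, by omega⟩ :=
    Fin.ext (by show min (p + q + 0) (p + q + r - 1) = p + q; omega)
  have h1 : (⟨min (p + q + (r - 1)) (p + q + r - 1), by omega⟩ : Fin (p + q + r))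
      = ⟨p + q + r - 1, by subst hpq hq; omega⟩ :=
    Fin.ext (by show min (p + q + (r - 1)) (p + q + r - 1) = p + q + r - 1; omega)
  exact ⟨SimpleGraph.Walk.cons e1 (SimpleGraph.Walk.cons e2 (w.copy h0 h1)),
    by simp only [SimpleGraph.Walk.length_cons, SimpleGraph.Walk.length_copy, hw]; omega⟩

set_option maxHeartbeats 1000000 in
lemma biii_walkC (p q r : ℕ) (hr : 1 ≤ r) (hpq : p = q) (hq : q = r + 2) :
    ∃ w : (bicyclicIII p q r).Walk ⟨p + q - 1, by omega⟩ ⟨p + 1, by subst hpq hq; omega⟩,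
      w.length = r := by
  obtain ⟨w, hw⟩ := chain_walk (G := bicyclicIII p q r)
    (fun i => (⟨p + q - 1 - min i (q - 2), by omega⟩ : Fin (p + q + r))) (q - 2)
    (by
      intro i hi
      rw [biii_adj_iff]
      dsimp only
      have h1 : min i (q - 2) = i := by omega
      have h2 : min (i + 1) (q - 2) = i + 1 := by omega
      rw [h1, h2]
      exact ⟨by omega, Or.inr (Or.inl ⟨by omega, Or.inr (Or.inl ⟨by omega, by omega⟩)⟩)⟩)
  have h0 : (⟨p + q - 1 - min 0 (q - 2), by omega⟩ : Fin (p + q + r))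
      = ⟨p + q - 1, by omega⟩ :=
    Fin.ext (by show p + q - 1 - min 0 (q - 2) = p + q - 1; omega)
  have h1 : (⟨p + q - 1 - min (q - 2) (q - 2), by omega⟩ : Fin (p + q + r))
      = ⟨p + 1, by subst hpq hq; omega⟩ :=
    Fin.ext (by show p + q - 1 - min (q - 2) (q - 2) = p + 1; omega)
  exact ⟨w.copy h0 h1, by rw [SimpleGraph.Walk.length_copy, hw]; omega⟩

set_option maxHeartbeats 1000000 in
lemma biii_dist1 (p q r : ℕ) (hr : 1 ≤ r) (hpq : p = q) (hq : q = r + 2) :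
    (bicyclicIII p q r).dist ⟨p - 1, by subst hpq hq; omega⟩ ⟨0, by subst hpq hq; omega⟩ = r + 1 := by
  obtain ⟨w, hw⟩ := biii_walkA p q r hr hpq hq
  have hub := SimpleGraph.dist_le w
  rw [hw, SimpleGraph.dist_comm] at hub
  have hlb := dist_ge_of_lipschitz (fzero p q r) (biii_lip0 p q r hr hpq hq)
    w.reachable.symm
  have hv : (fzero p q r ⟨p - 1, by subst hpq hq; omega⟩ - fzero p q r ⟨0, by subst hpq hq; omega⟩).natAbs
      = r + 1 := by
    simp only [fzero]; split_ifs <;> omega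
  rw [hv] at hlb
  omega

set_option maxHeartbeats 1000000 in
lemma biii_dist2 (p q r : ℕ) (hr : 1 ≤ r) (hpq : p = q) (hq : q = r + 2) :
    (bicyclicIII p q r).dist ⟨p + q + r - 1, by subst hpq hq; omega⟩ ⟨0, by subst hpq hq; omega⟩ = r + 1 := by
  obtain ⟨w, hw⟩ := biii_walkB p q r hr hpq hq
  have hub := SimpleGraph.dist_le w
  rw [hw, SimpleGraph.dist_comm] at hub
  have hlb := dist_ge_of_lipschitz (fzero p q r) (biii_lip0 p q r hr hpq hq)
    w.reachable.symm
  have hv : (fzero p q r ⟨p + q + r - 1, by subst hpq hq; omega⟩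
      - fzero p q r ⟨0, by subst hpq hq; omega⟩).natAbs = r + 1 := by
    simp only [fzero]; split_ifs <;> omega
  rw [hv] at hlb
  omega

set_option maxHeartbeats 1000000 in
lemma biii_dist3 (p q r : ℕ) (hr : 1 ≤ r) (hpq : p = q) (hq : q = r + 2) :
    (bicyclicIII p q r).dist ⟨p - 1, by subst hpq hq; omega⟩ ⟨p + 1, by subst hpq hq; omega⟩ = r + 1 := by
  have e3 : (bicyclicIII p q r).Adj ⟨p - 1, by subst hpq hq; omega⟩ ⟨p + q - 1, by omega⟩ :=
    (biii_adj_iff p q r _ _).mpr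
      ⟨by show ¬ (p - 1 = p + q - 1); omega,
        Or.inr (Or.inr (Or.inr (Or.inr (Or.inl ⟨rfl, rfl⟩))))⟩
  obtain ⟨w, hw⟩ := biii_walkC p q r hr hpq hq
  have hub := SimpleGraph.dist_le (SimpleGraph.Walk.cons e3 w)
  rw [SimpleGraph.Walk.length_cons, hw] at hub
  have hlb := dist_ge_of_lipschitz (fone p q r) (biii_lip1 p q r hr hpq hq)
    (SimpleGraph.Walk.cons e3 w).reachable
  have hv : (fone p q r ⟨p - 1, by subst hpq hq; omega⟩ - fone p q r ⟨p + 1, by subst hpq hq; omega⟩).natAbs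
      = r + 1 := by
    simp only [fone]; split_ifs <;> omega
  rw [hv] at hlb
  omega

set_option maxHeartbeats 1000000 in
lemma biii_dist4 (p q r : ℕ) (hr : 1 ≤ r) (hpq : p = q) (hq : q = r + 2) :
    (bicyclicIII p q r).dist ⟨p + q + r - 1, by subst hpq hq; omega⟩ ⟨p + 1, by subst hpq hq; omega⟩ = r + 1 := by
  have e4 : (bicyclicIII p q r).Adj ⟨p + q + r - 1, by subst hpq hq; omega⟩ ⟨p + q - 1, by omega⟩ :=
    (biii_adj_iff p q r _ _).mpr
      ⟨by show ¬ (p + q + r - 1 = p + q - 1); omega,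
        Or.inr (Or.inr (Or.inr (Or.inr (Or.inr ⟨rfl, rfl⟩))))⟩
  obtain ⟨w, hw⟩ := biii_walkC p q r hr hpq hq
  have hub := SimpleGraph.dist_le (SimpleGraph.Walk.cons e4 w)
  rw [SimpleGraph.Walk.length_cons, hw] at hub
  have hlb := dist_ge_of_lipschitz (fone p q r) (biii_lip1 p q r hr hpq hq)
    (SimpleGraph.Walk.cons e4 w).reachable
  have hv : (fone p q r ⟨p + q + r - 1, by subst hpq hq; omega⟩
      - fone p q r ⟨p + 1, by subst hpq hq; omega⟩).natAbs = r + 1 := by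
    simp only [fone]; split_ifs <;> omega
  rw [hv] at hlb
  omega

set_option maxHeartbeats 1000000 in
theorem bicyclicIII_p_eq_q_diff_two_pair_two (p q r : ℕ)
    (hr : 1 ≤ r) (hpq : p = q) (hq : q = r + 2) :
    (bicyclicIII p q r).dist ⟨p - 1, by omega⟩ ⟨0, by omega⟩
      = (bicyclicIII p q r).dist ⟨p + q + r - 1, by omega⟩ ⟨0, by omega⟩
    ∧ (bicyclicIII p q r).dist ⟨p - 1, by omega⟩ ⟨p + 1, by omega⟩
      = (bicyclicIII p q r).dist ⟨p + q + r - 1, by omega⟩ ⟨p + 1, by omega⟩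
    ∧ ¬ IsResolving (bicyclicIII p q r)
        {(⟨0, by omega⟩ : Fin (p + q + r)), ⟨p + 1, by omega⟩} := by
  have d1 := biii_dist1 p q r hr hpq hq
  have d2 := biii_dist2 p q r hr hpq hq
  have d3 := biii_dist3 p q r hr hpq hq
  have d4 := biii_dist4 p q r hr hpq hq
  refine ⟨d1.trans d2.symm, d3.trans d4.symm, ?_⟩
  intro h
  have heq := h ⟨p - 1, by omega⟩ ⟨p + q + r - 1, by omega⟩ (by
    intro w hw
    simp only [Set.mem_insert_iff, Set.mem_singleton_iff] at hw
    rcases hw with rfl | rfl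
    · exact d1.trans d2.symm
    · exact d3.trans d4.symm)
  have := congrArg Fin.val heq
  dsimp only at this
  omega
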